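/- Let G be a finite connected simple graph with n vertices and m edges, W a quaternionic weighted matrix of G, and t a quaternion. Then Sdet(I_{2m} − t·(B_w − J_0)) · |1 − t²|^{2n} = |1 − t²|^{2m} · Sdet(I_n − W·t + (D_w − I_n)·t²), where matrix-times-t denotes entrywise right multiplication by t. (Equivalently, the reciprocal of the quaternionic second weighted zeta function Z_1^ℍ(G,w,t)^{-1} = Sdet(I_{2m} − t(B_w − J_0)) equals |1 − t²|^{2m−2n}·Sdet(I_n − W t + (D_w − I_n)t²).) -/

import Mathlib

/-!
For `t² ≠ 1` the matrix `1 + t J₀` is invertible with inverse `(1 - t²)⁻¹ (1 - t J₀)`, since the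
real involution `J₀` commutes with `t`; pairing every arc with its reverse brings it to the block
form `[[1, t], [t, 1]]`, whose Study determinant is `|1 - t²|^{2m}`. With the head incidence
matrix `T`, the tail incidence matrix `S` and the tail-weighted matrix `W̃` one has `B_w = T W̃`,
`W̃ T = W`, `W̃ S = D_w` and `J₀ T = S`. Hence `I - t(B_w - J₀) = (1 + t J₀)(I - X W̃)` with
`X = (1 + t J₀)⁻¹ t T`, and `Sdet(I - X W̃) = Sdet(I - W̃ X)` because `ψ` is multiplicative;
the `n × n` matrix `I - W̃ X` is `(I - W t + (D_w - I) t²)(1 - t²)⁻¹`. When `t² = 1` both sides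
vanish unless the graph has no edges, and then both equal `|1 - t²|^{2n}`.
-/

open scoped Quaternion

/-- The simplex part of a quaternion `x = a + j·b`: the complex number `a = x₀ + x₁·i`. -/
noncomputable def qSimplex (x : ℍ[ℝ]) : ℂ := ⟨x.re, x.imI⟩

/-- The perplex part of a quaternion `x = a + j·b`: the complex number `b = x₂ − x₃·i`. -/
noncomputable def qPerplex (x : ℍ[ℝ]) : ℂ := ⟨x.imJ, -x.imK⟩

/-- The simplex part of a quaternionic matrix. -/
noncomputable def matSimplex {α β : Type*} (M : Matrix α β ℍ[ℝ]) : Matrix α β ℂ :=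
  Matrix.of fun r s => qSimplex (M r s)

/-- The perplex part of a quaternionic matrix. -/
noncomputable def matPerplex {α β : Type*} (M : Matrix α β ℍ[ℝ]) : Matrix α β ℂ :=
  Matrix.of fun r s => qPerplex (M r s)

/-- The complex-block representation `ψ(M) = [[Mˢ, −conj(Mᵖ)], [Mᵖ, conj(Mˢ)]]`
of a quaternionic matrix `M = Mˢ + j·Mᵖ`. -/
noncomputable def psi {α β : Type*} (M : Matrix α β ℍ[ℝ]) : Matrix (α ⊕ α) (β ⊕ β) ℂ :=
  Matrix.fromBlocks (matSimplex M) (-(matPerplex M).map (starRingEnd ℂ))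
    (matPerplex M) ((matSimplex M).map (starRingEnd ℂ))

/-- The Study determinant of a square quaternionic matrix: `Sdet(M) = det(ψ(M))`. -/
noncomputable def Sdet {α : Type*} [Fintype α] [DecidableEq α] (M : Matrix α α ℍ[ℝ]) : ℂ :=
  (psi M).det

variable {V : Type*} [Fintype V] [DecidableEq V]

/-- The weighted matrix `B_w` on arcs (darts): `(B_w)_{ef} = w(f)` if `t(e) = o(f)`, else `0`. -/
noncomputable def arcWeightMat (G : SimpleGraph V) [DecidableRel G.Adj]
    (W : Matrix V V ℍ[ℝ]) : Matrix G.Dart G.Dart ℍ[ℝ] :=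
  Matrix.of fun e f => if e.snd = f.fst then W f.fst f.snd else 0

/-- The arc-reversal matrix `J₀`: `(J₀)_{ef} = 1` if `f = e⁻¹`, else `0`. -/
noncomputable def arcRevMat (G : SimpleGraph V) [DecidableRel G.Adj] :
    Matrix G.Dart G.Dart ℍ[ℝ] :=
  Matrix.of fun e f => if f = e.symm then 1 else 0

/-- The diagonal matrix `D_w` with `(D_w)_{uu} = Σ_{e : o(e) = u} w(e)`. -/
noncomputable def degWeightMat (G : SimpleGraph V) [DecidableRel G.Adj]
    (W : Matrix V V ℍ[ℝ]) : Matrix V V ℍ[ℝ] :=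
  Matrix.diagonal fun u => ∑ e : G.Dart, if e.fst = u then W e.fst e.snd else 0

open ComplexConjugate

lemma Matrix.mul_smul_of_commute {R ι κ μ : Type*} [Semiring R] [Fintype κ] (q : R)
    (A : Matrix ι κ R) (B : Matrix κ μ R) (h : ∀ i j, Commute q (A i j)) :
    A * (q • B) = q • (A * B) := by
  ext i k
  simp only [Matrix.mul_apply, Matrix.smul_apply, smul_eq_mul, Finset.mul_sum, ← mul_assoc,
    (h i _).eq]

lemma Matrix.mul_smul_one_apply {R ι κ : Type*} [Semiring R] [Fintype κ] [DecidableEq κ]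
    (A : Matrix ι κ R) (q : R) (i : ι) (j : κ) :
    (A * (q • (1 : Matrix κ κ R))) i j = A i j * q := by
  simp [Matrix.smul_one_eq_diagonal]

lemma commute_ite_one_zero {R : Type*} [Semiring R] (q : R) (p : Prop) [Decidable p] :
    Commute q (if p then 1 else 0) := by
  split_ifs
  exacts [Commute.one_right q, Commute.zero_right q]

lemma qSimplex_add (x y : ℍ[ℝ]) : qSimplex (x + y) = qSimplex x + qSimplex y := by
  simp [qSimplex, Complex.ext_iff]

lemma qPerplex_add (x y : ℍ[ℝ]) : qPerplex (x + y) = qPerplex x + qPerplex y := by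
  simp [qPerplex, Complex.ext_iff]
  ring

lemma qSimplex_mul (x y : ℍ[ℝ]) :
    qSimplex (x * y) = qSimplex x * qSimplex y - conj (qPerplex x) * qPerplex y := by
  simp [qSimplex, qPerplex, Complex.ext_iff]
  constructor <;> ring

lemma qPerplex_mul (x y : ℍ[ℝ]) :
    qPerplex (x * y) = conj (qSimplex x) * qPerplex y + qPerplex x * qSimplex y := by
  simp [qSimplex, qPerplex, Complex.ext_iff]
  constructor <;> ring

lemma normSq_qSimplex_add_normSq_qPerplex (x : ℍ[ℝ]) :
    Complex.normSq (qSimplex x) + Complex.normSq (qPerplex x) = ‖x‖ ^ 2 := by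
  rw [sq, ← Quaternion.normSq_eq_norm_mul_self, Quaternion.normSq_def']
  simp [Complex.normSq, qSimplex, qPerplex]
  ring

section StudyDeterminant

variable {α β γ : Type*}

lemma matSimplex_mul [Fintype β] (M : Matrix α β ℍ[ℝ]) (N : Matrix β γ ℍ[ℝ]) :
    matSimplex (M * N) = matSimplex M * matSimplex N - (matPerplex M).map conj * matPerplex N := by
  ext i j
  simp only [matSimplex, matPerplex, Matrix.of_apply, Matrix.mul_apply, Matrix.sub_apply,
    Matrix.map_apply, ← Finset.sum_sub_distrib, ← qSimplex_mul]
  exact map_sum (AddMonoidHom.mk' qSimplex qSimplex_add) _ _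

lemma matPerplex_mul [Fintype β] (M : Matrix α β ℍ[ℝ]) (N : Matrix β γ ℍ[ℝ]) :
    matPerplex (M * N) = (matSimplex M).map conj * matPerplex N + matPerplex M * matSimplex N := by
  ext i j
  simp only [matSimplex, matPerplex, Matrix.of_apply, Matrix.mul_apply, Matrix.add_apply,
    Matrix.map_apply, ← Finset.sum_add_distrib, ← qPerplex_mul]
  exact map_sum (AddMonoidHom.mk' qPerplex qPerplex_add) _ _

lemma psi_zero : psi (0 : Matrix α β ℍ[ℝ]) = 0 := by
  ext (i | i) (j | j) <;> simp [psi, matSimplex, matPerplex, qSimplex, qPerplex, Complex.ext_iff]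

lemma psi_sub (M N : Matrix α β ℍ[ℝ]) : psi (M - N) = psi M - psi N := by
  ext (i | i) (j | j) <;> apply Complex.ext <;>
    simp [psi, matSimplex, matPerplex, qSimplex, qPerplex] <;> ring

lemma psi_mul [Fintype β] (M : Matrix α β ℍ[ℝ]) (N : Matrix β γ ℍ[ℝ]) :
    psi (M * N) = psi M * psi N := by
  rw [psi, psi, psi, Matrix.fromBlocks_multiply, matSimplex_mul, matPerplex_mul]
  congr 1 <;> ext i j <;> simp [Matrix.mul_apply, sub_eq_add_neg] <;> abel

lemma psi_smul_one [DecidableEq α] (q : ℍ[ℝ]) :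
    psi (q • (1 : Matrix α α ℍ[ℝ])) =
      Matrix.fromBlocks (qSimplex q • 1) (-conj (qPerplex q) • 1) (qPerplex q • 1)
        (conj (qSimplex q) • 1) := by
  ext (i | i) (j | j) <;> by_cases h : i = j <;>
    simp [psi, matSimplex, matPerplex, Matrix.one_apply, h, qSimplex, qPerplex, Complex.ext_iff]

lemma psi_one [DecidableEq α] : psi (1 : Matrix α α ℍ[ℝ]) = 1 := by
  ext (i | i) (j | j) <;> by_cases h : i = j <;>
    simp [psi, matSimplex, matPerplex, Matrix.one_apply, h, qSimplex, qPerplex, Complex.ext_iff]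

lemma psi_submatrix {α' β' : Type*} (M : Matrix α β ℍ[ℝ]) (f : α' → α) (g : β' → β) :
    psi (M.submatrix f g) = (psi M).submatrix (Sum.map f f) (Sum.map g g) := by
  ext (i | i) (j | j) <;> rfl

lemma psi_fromBlocks (A : Matrix α α ℍ[ℝ]) (B : Matrix α β ℍ[ℝ]) (C : Matrix β α ℍ[ℝ])
    (D : Matrix β β ℍ[ℝ]) :
    psi (Matrix.fromBlocks A B C D) =
      (Matrix.fromBlocks (psi A) (psi B) (psi C) (psi D)).submatrix
        (Equiv.sumSumSumComm α β α β) (Equiv.sumSumSumComm α β α β) := by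
  ext ((i | i) | (i | i)) ((j | j) | (j | j)) <;> rfl

variable [Fintype α] [DecidableEq α] [Fintype β] [DecidableEq β]

lemma Sdet_one : Sdet (1 : Matrix α α ℍ[ℝ]) = 1 := by
  rw [Sdet, psi_one, Matrix.det_one]

lemma Sdet_mul (M N : Matrix α α ℍ[ℝ]) : Sdet (M * N) = Sdet M * Sdet N := by
  rw [Sdet, Sdet, Sdet, psi_mul, Matrix.det_mul]

lemma Sdet_one_sub_mul_comm (M : Matrix α β ℍ[ℝ]) (N : Matrix β α ℍ[ℝ]) :
    Sdet (1 - M * N) = Sdet (1 - N * M) := by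
  simpa only [Sdet, psi_sub, psi_one, psi_mul] using Matrix.det_one_sub_mul_comm (psi M) (psi N)

lemma Sdet_reindex (e : α ≃ β) (M : Matrix α α ℍ[ℝ]) : Sdet (Matrix.reindex e e M) = Sdet M := by
  rw [Sdet, Matrix.reindex_apply, psi_submatrix]
  exact Matrix.det_submatrix_equiv_self (e.sumCongr e).symm (psi M)

lemma Sdet_fromBlocks_zero₂₁ (A : Matrix α α ℍ[ℝ]) (B : Matrix α β ℍ[ℝ]) (D : Matrix β β ℍ[ℝ]) :
    Sdet (Matrix.fromBlocks A B 0 D) = Sdet A * Sdet D := by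
  rw [Sdet, psi_fromBlocks, Matrix.det_submatrix_equiv_self, psi_zero,
    Matrix.det_fromBlocks_zero₂₁, Sdet, Sdet]

lemma Sdet_fromBlocks_zero₁₂ (A : Matrix α α ℍ[ℝ]) (C : Matrix β α ℍ[ℝ]) (D : Matrix β β ℍ[ℝ]) :
    Sdet (Matrix.fromBlocks A 0 C D) = Sdet A * Sdet D := by
  rw [Sdet, psi_fromBlocks, Matrix.det_submatrix_equiv_self, psi_zero,
    Matrix.det_fromBlocks_zero₁₂, Sdet, Sdet]

open Kronecker in
lemma det_fromBlocks_smul_one {R : Type*} [CommRing R] (a b c d : R) :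
    (Matrix.fromBlocks (a • (1 : Matrix α α R)) (b • (1 : Matrix α α R)) (c • (1 : Matrix α α R))
      (d • (1 : Matrix α α R))).det =
      (a * d - b * c) ^ Fintype.card α := by
  let e : α ⊕ α ≃ Fin 2 × α :=
    (Equiv.boolProdEquivSum α).symm.trans (finTwoEquiv.symm.prodCongr (Equiv.refl α))
  have hkron : Matrix.fromBlocks (a • (1 : Matrix α α R)) (b • 1) (c • 1) (d • 1) =
      (!![a, b; c, d] ⊗ₖ (1 : Matrix α α R)).submatrix e e := by
    ext (x | x) (y | y) <;> simp [e, Equiv.boolProdEquivSum, finTwoEquiv, Matrix.one_apply]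
  rw [hkron, Matrix.det_submatrix_equiv_self, Matrix.det_kronecker, Matrix.det_one, one_pow,
    mul_one, Matrix.det_fin_two_of]

lemma Sdet_smul_one (q : ℍ[ℝ]) :
    Sdet (q • (1 : Matrix α α ℍ[ℝ])) = ((‖q‖ ^ (2 * Fintype.card α) : ℝ) : ℂ) := by
  rw [Sdet, psi_smul_one, det_fromBlocks_smul_one, neg_mul, sub_neg_eq_add, Complex.mul_conj,
    mul_comm, Complex.mul_conj, ← Complex.ofReal_add, normSq_qSimplex_add_normSq_qPerplex,
    ← Complex.ofReal_pow, pow_mul]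

lemma Sdet_fromBlocks_one_smul_smul_one (t : ℍ[ℝ]) :
    Sdet (Matrix.fromBlocks (1 : Matrix α α ℍ[ℝ]) (t • (1 : Matrix α α ℍ[ℝ])) (t • 1) 1) =
      ((‖1 - t ^ 2‖ ^ (2 * Fintype.card α) : ℝ) : ℂ) := by
  have hfactor : Matrix.fromBlocks 1 (t • 1) (t • 1) (1 : Matrix α α ℍ[ℝ]) =
      Matrix.fromBlocks (1 : Matrix α α ℍ[ℝ]) 0 (t • 1) 1 *
        Matrix.fromBlocks (1 : Matrix α α ℍ[ℝ]) (t • 1) 0 ((1 - t ^ 2) • 1) := by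
    rw [Matrix.fromBlocks_multiply]
    congr 1 <;> simp [smul_smul, ← add_smul, sq]
  rw [hfactor, Sdet_mul, Sdet_fromBlocks_zero₁₂, Sdet_fromBlocks_zero₂₁, Sdet_one, Sdet_smul_one]
  simp only [one_mul]

lemma Sdet_one_add_smul_of_involutive (σ : α → α) (hσ : Function.Involutive σ)
    (hfix : ∀ i, σ i ≠ i) (t : ℍ[ℝ]) :
    Sdet (1 + t • Matrix.of fun i j => if j = σ i then (1 : ℍ[ℝ]) else 0) =
      ((‖1 - t ^ 2‖ ^ Fintype.card α : ℝ) : ℂ) := by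
  -- any linear order picks the representative `i < σ i` of each orbit `{i, σ i}`
  let _ : LinearOrder α := LinearOrder.lift' _ (Fintype.equivFin α).injective
  let P : α → Prop := fun i => i < σ i
  have hP : ∀ i, P i ↔ ¬ P (σ i) := fun i => by
    simp only [P, hσ i, not_lt]
    exact ⟨le_of_lt, fun h => lt_of_le_of_ne h (hfix i).symm⟩
  let s : {i // P i} ≃ {i // ¬ P i} := (hσ.toPerm σ).subtypeEquiv hP
  let e : {i // P i} ⊕ {i // P i} ≃ α := (Equiv.sumCongr (Equiv.refl _) s).trans (Equiv.sumCompl P)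
  have hblocks : Matrix.reindex e.symm e.symm
      (1 + t • Matrix.of fun i j => if j = σ i then (1 : ℍ[ℝ]) else 0) =
      Matrix.fromBlocks 1 (t • 1) (t • 1) 1 := by
    have hne : ∀ i j, P i → P j → j ≠ σ i := fun i j hi hj h => (hP i).mp hi (h ▸ hj)
    have hs : ∀ i, (s i : α) = σ i := fun _ => rfl
    refine Matrix.ext ?_
    rintro (⟨i, hi⟩ | ⟨i, hi⟩) (⟨j, hj⟩ | ⟨j, hj⟩) <;>
      simp [e, Matrix.one_apply, hσ _, hσ.eq_iff, hs, hne i j hi hj, hne j i hj hi]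
    all_goals exact if_congr eq_comm rfl rfl
  rw [← Sdet_reindex e.symm, hblocks, Sdet_fromBlocks_one_smul_smul_one, ← Fintype.card_congr e,
    Fintype.card_sum, two_mul]

end StudyDeterminant

section VertexMatrix

variable {ι : Type*} [DecidableEq ι]

noncomputable def bassVertexMat (A D : Matrix ι ι ℍ[ℝ]) (t : ℍ[ℝ]) : Matrix ι ι ℍ[ℝ] :=
  1 - (Matrix.of fun u v => A u v * t) + (Matrix.of fun u v => (D - 1) u v * t ^ 2)

lemma bassVertexMat_zero_zero (t : ℍ[ℝ]) :
    bassVertexMat (0 : Matrix ι ι ℍ[ℝ]) 0 t = (1 - t ^ 2) • 1 := by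
  ext u v : 1
  by_cases huv : u = v <;> simp [bassVertexMat, Matrix.one_apply, huv, sub_eq_add_neg]

lemma bassVertexMat_mul_inv_smul_one [Fintype ι] (A D : Matrix ι ι ℍ[ℝ]) {t : ℍ[ℝ]}
    (hc : 1 - t ^ 2 ≠ 0) :
    bassVertexMat A D t * ((1 - t ^ 2)⁻¹ • 1) =
      1 - (A * (((1 - t ^ 2)⁻¹ * t) • 1) - D * (((1 - t ^ 2)⁻¹ * t ^ 2) • 1)) := by
  set c := 1 - t ^ 2 with hc_def
  have hct : Commute t c⁻¹ :=
    ((Commute.one_right t).sub_right ((Commute.refl t).pow_right 2)).inv_right₀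
  ext u v : 1
  simp only [bassVertexMat, Matrix.sub_apply, Matrix.add_apply, Matrix.mul_smul_one_apply,
    Matrix.of_apply]
  calc _ = (1 : Matrix ι ι ℍ[ℝ]) u v * (c * c⁻¹) - A u v * (t * c⁻¹) +
          D u v * (t ^ 2 * c⁻¹) := by rw [hc_def]; noncomm_ring
    _ = _ := by rw [mul_inv_cancel₀ hc, hct.eq, (hct.pow_left 2).eq]; noncomm_ring

end VertexMatrix

section IncidenceMatrices

variable (G : SimpleGraph V)

noncomputable def headIncidenceMat : Matrix G.Dart V ℍ[ℝ] :=
  Matrix.of fun e u => if e.snd = u then 1 else 0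

noncomputable def tailIncidenceMat : Matrix G.Dart V ℍ[ℝ] :=
  Matrix.of fun e u => if e.fst = u then 1 else 0

noncomputable def tailWeightMat (W : Matrix V V ℍ[ℝ]) : Matrix V G.Dart ℍ[ℝ] :=
  Matrix.of fun u f => if f.fst = u then W f.fst f.snd else 0

lemma headIncidenceMat_mul_smul_one (q : ℍ[ℝ]) :
    headIncidenceMat G * (q • (1 : Matrix V V ℍ[ℝ])) = q • headIncidenceMat G := by
  rw [Matrix.mul_smul_of_commute q (headIncidenceMat G) 1 fun _ _ => commute_ite_one_zero q _,
    Matrix.mul_one]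

lemma tailIncidenceMat_mul_smul_one (q : ℍ[ℝ]) :
    tailIncidenceMat G * (q • (1 : Matrix V V ℍ[ℝ])) = q • tailIncidenceMat G := by
  rw [Matrix.mul_smul_of_commute q (tailIncidenceMat G) 1 fun _ _ => commute_ite_one_zero q _,
    Matrix.mul_one]

lemma arcRevMat_mul_smul [DecidableRel G.Adj] {κ : Type*} (q : ℍ[ℝ])
    (M : Matrix G.Dart κ ℍ[ℝ]) :
    arcRevMat G * (q • M) = q • (arcRevMat G * M) :=
  Matrix.mul_smul_of_commute _ _ _ fun _ _ => commute_ite_one_zero _ _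

lemma arcRevMat_mul_self [DecidableRel G.Adj] : arcRevMat G * arcRevMat G = 1 := by
  ext e f : 1
  simp only [arcRevMat, Matrix.mul_apply, Matrix.of_apply, ite_mul, one_mul, zero_mul,
    Finset.sum_ite_eq', Finset.mem_univ, if_true, SimpleGraph.Dart.symm_symm, Matrix.one_apply,
    eq_comm]

lemma arcRevMat_mul_headIncidenceMat [DecidableRel G.Adj] :
    arcRevMat G * headIncidenceMat G = tailIncidenceMat G := by
  ext e u : 1
  simp only [arcRevMat, headIncidenceMat, tailIncidenceMat, Matrix.mul_apply, Matrix.of_apply,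
    ite_mul, one_mul, zero_mul, Finset.sum_ite_eq', Finset.mem_univ, if_true,
    SimpleGraph.Dart.symm_toProd, Prod.snd_swap]

lemma headIncidenceMat_mul_tailWeightMat [DecidableRel G.Adj] (W : Matrix V V ℍ[ℝ]) :
    headIncidenceMat G * tailWeightMat G W = arcWeightMat G W := by
  ext e f : 1
  simp [headIncidenceMat, tailWeightMat, arcWeightMat, Matrix.mul_apply]

lemma tailWeightMat_mul_tailIncidenceMat [DecidableRel G.Adj] (W : Matrix V V ℍ[ℝ]) :
    tailWeightMat G W * tailIncidenceMat G = degWeightMat G W := by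
  ext u v : 1
  simp only [tailWeightMat, tailIncidenceMat, degWeightMat, Matrix.mul_apply, Matrix.of_apply,
    Matrix.diagonal_apply, mul_ite, mul_one, mul_zero, ← ite_and]
  split_ifs with huv
  · simp only [huv, and_self]
  · exact Finset.sum_eq_zero fun e _ => if_neg fun h => huv (h.2.symm.trans h.1)

lemma tailWeightMat_mul_headIncidenceMat [DecidableRel G.Adj] (W : Matrix V V ℍ[ℝ])
    (hW : ∀ u v, ¬ G.Adj u v → W u v = 0) :
    tailWeightMat G W * headIncidenceMat G = W := by
  ext u v : 1
  simp only [tailWeightMat, headIncidenceMat, Matrix.mul_apply, Matrix.of_apply, mul_ite, mul_one,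
    mul_zero, ← ite_and]
  by_cases huv : G.Adj u v
  · rw [Fintype.sum_eq_single ⟨(u, v), huv⟩]
    · simp
    · rintro e he
      refine if_neg fun ⟨h2, h1⟩ => he (SimpleGraph.Dart.ext _ _ (Prod.ext h1 h2))
  · rw [hW u v huv]
    refine Finset.sum_eq_zero fun e _ => if_neg ?_
    rintro ⟨rfl, rfl⟩
    exact huv e.adj

end IncidenceMatrices

section BassIdentity

variable (G : SimpleGraph V) [DecidableRel G.Adj] (W : Matrix V V ℍ[ℝ]) (t : ℍ[ℝ])

lemma one_sub_smul_arcRevMat_mul_one_add :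
    (1 - t • arcRevMat G) * (1 + t • arcRevMat G) = (1 - t ^ 2) • 1 := by
  have hsq : (t • arcRevMat G) * (t • arcRevMat G) = t ^ 2 • 1 := by
    rw [Matrix.smul_mul, arcRevMat_mul_smul, arcRevMat_mul_self, smul_smul, sq]
  rw [sub_smul, one_smul, ← hsq]
  noncomm_ring

lemma one_add_smul_arcRevMat_mul_inv_smul (hc : 1 - t ^ 2 ≠ 0) :
    (1 + t • arcRevMat G) * ((1 - t ^ 2)⁻¹ • (1 - t • arcRevMat G)) = 1 := by
  rw [mul_eq_one_comm, Matrix.smul_mul, one_sub_smul_arcRevMat_mul_one_add, smul_smul,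
    inv_mul_cancel₀ hc, one_smul]

lemma Sdet_one_add_smul_arcRevMat :
    Sdet (1 + t • arcRevMat G) = ((‖1 - t ^ 2‖ ^ (2 * G.edgeFinset.card) : ℝ) : ℂ) := by
  rw [← G.dart_card_eq_twice_card_edges]
  exact Sdet_one_add_smul_of_involutive _ SimpleGraph.Dart.symm_involutive
    SimpleGraph.Dart.symm_ne t

lemma bass_identity_of_one_sub_sq_ne_zero (hW : ∀ u v, ¬ G.Adj u v → W u v = 0)
    (hc : 1 - t ^ 2 ≠ 0) :
    Sdet (1 - t • (arcWeightMat G W - arcRevMat G)) *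
        ((‖1 - t ^ 2‖ ^ (2 * Fintype.card V) : ℝ) : ℂ) =
      ((‖1 - t ^ 2‖ ^ (2 * G.edgeFinset.card) : ℝ) : ℂ) *
        Sdet (bassVertexMat W (degWeightMat G W) t) := by
  set c := 1 - t ^ 2 with hc_def
  set X := (c⁻¹ • (1 - t • arcRevMat G)) * (t • headIncidenceMat G)
  have hfactor : 1 - t • (arcWeightMat G W - arcRevMat G) =
      (1 + t • arcRevMat G) * (1 - X * tailWeightMat G W) := by
    rw [Matrix.mul_sub, Matrix.mul_one, ← Matrix.mul_assoc, ← Matrix.mul_assoc,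
      one_add_smul_arcRevMat_mul_inv_smul G t hc, Matrix.one_mul, Matrix.smul_mul,
      headIncidenceMat_mul_tailWeightMat, smul_sub]
    abel
  have hX : X = headIncidenceMat G * ((c⁻¹ * t) • (1 : Matrix V V ℍ[ℝ])) -
      tailIncidenceMat G * ((c⁻¹ * t ^ 2) • (1 : Matrix V V ℍ[ℝ])) := by
    simp only [X]
    rw [headIncidenceMat_mul_smul_one, tailIncidenceMat_mul_smul_one, Matrix.smul_mul,
      Matrix.sub_mul, Matrix.one_mul, Matrix.smul_mul, arcRevMat_mul_smul,
      arcRevMat_mul_headIncidenceMat, smul_sub, smul_smul, smul_smul, smul_smul, mul_assoc, ← sq]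
  have hvertex :
      1 - tailWeightMat G W * X = bassVertexMat W (degWeightMat G W) t * (c⁻¹ • 1) := by
    rw [bassVertexMat_mul_inv_smul_one _ _ hc, hX, Matrix.mul_sub, ← Matrix.mul_assoc,
      ← Matrix.mul_assoc, tailWeightMat_mul_headIncidenceMat G W hW,
      tailWeightMat_mul_tailIncidenceMat]
  have hc_pow : ((‖c‖ ^ (2 * Fintype.card V) : ℝ) : ℂ) ≠ 0 := by
    exact_mod_cast pow_ne_zero _ (norm_ne_zero_iff.mpr hc)
  rw [hfactor, Sdet_mul, Sdet_one_sub_mul_comm, hvertex, Sdet_mul, Sdet_smul_one,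
    Sdet_one_add_smul_arcRevMat, ← hc_def, norm_inv, inv_pow, Complex.ofReal_inv]
  field_simp

lemma bass_identity_of_edgeFinset_card_eq_zero (hW : ∀ u v, ¬ G.Adj u v → W u v = 0)
    (hm : G.edgeFinset.card = 0) :
    Sdet (1 - t • (arcWeightMat G W - arcRevMat G)) *
        ((‖1 - t ^ 2‖ ^ (2 * Fintype.card V) : ℝ) : ℂ) =
      ((‖1 - t ^ 2‖ ^ (2 * G.edgeFinset.card) : ℝ) : ℂ) *
        Sdet (bassVertexMat W (degWeightMat G W) t) := by
  have hadj : ∀ u v, ¬ G.Adj u v := by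
    simp [SimpleGraph.edgeFinset_eq_empty.mp (Finset.card_eq_zero.mp hm)]
  have : IsEmpty G.Dart := ⟨fun d => hadj _ _ d.adj⟩
  have hW0 : W = 0 := by
    ext u v : 1
    exact hW u v (hadj u v)
  have hD0 : degWeightMat G W = 0 := by
    simp [degWeightMat]
  rw [hD0, hW0, bassVertexMat_zero_zero, Sdet_smul_one, hm, Sdet, Matrix.det_isEmpty]
  simp

end BassIdentity

theorem quaternionic_second_weighted_zeta_bass_general (G : SimpleGraph V) [DecidableRel G.Adj]
    (W : Matrix V V ℍ[ℝ]) (hW : ∀ u v, ¬ G.Adj u v → W u v = 0)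
    (t : ℍ[ℝ]) :
    Sdet (1 - t • (arcWeightMat G W - arcRevMat G)) *
        ((‖1 - t ^ 2‖ ^ (2 * Fintype.card V) : ℝ) : ℂ) =
      ((‖1 - t ^ 2‖ ^ (2 * G.edgeFinset.card) : ℝ) : ℂ) *
        Sdet (1 - (Matrix.of fun u v => W u v * t) +
          (Matrix.of fun u v => (degWeightMat G W - 1) u v * t ^ 2)) := by
  by_cases hm : G.edgeFinset.card = 0
  · exact bass_identity_of_edgeFinset_card_eq_zero G W t hW hm
  by_cases hc : 1 - t ^ 2 = 0
  · obtain ⟨d⟩ : Nonempty G.Dart :=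
      Fintype.card_pos_iff.mp (by rw [G.dart_card_eq_twice_card_edges]; omega)
    have hn : Fintype.card V ≠ 0 := (Fintype.card_pos_iff.mpr ⟨d.fst⟩).ne'
    simp [hc, hm, hn]
  · exact bass_identity_of_one_sub_sq_ne_zero G W t hW hc

theorem quaternionic_second_weighted_zeta_bass (G : SimpleGraph V) [DecidableRel G.Adj]
    (hG : G.Connected) (W : Matrix V V ℍ[ℝ]) (hW : ∀ u v, ¬ G.Adj u v → W u v = 0)
    (t : ℍ[ℝ]) :
    Sdet (1 - t • (arcWeightMat G W - arcRevMat G)) *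
        ((‖1 - t ^ 2‖ ^ (2 * Fintype.card V) : ℝ) : ℂ) =
      ((‖1 - t ^ 2‖ ^ (2 * G.edgeFinset.card) : ℝ) : ℂ) *
        Sdet (1 - (Matrix.of fun u v => W u v * t) +
          (Matrix.of fun u v => (degWeightMat G W - 1) u v * t ^ 2)) :=
  quaternionic_second_weighted_zeta_bass_general G W hW t
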